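/- Let σ: ℝⁿ → ℝⁿ be the softmax function, σ_i(z) = e^{z_i}/Σ_{j=1}^n e^{z_j}. Then for every z, h ∈ ℝⁿ, the first and second differentials of σ satisfy |dσ(z)·h|₁ ≤ 2|h|_∞ and |d²σ(z)·(h,h)|₁ ≤ 6|h|_∞², where |·|₁ and |·|_∞ denote the ℓ¹ and ℓ^∞ norms on ℝⁿ. -/

import Mathlib

/-!
With `m = ⟨σ(z), h⟩` and `q = ⟨σ(z), h ⊙ h⟩`, the components of the differentials are
`σ_i (h_i - m)` and `σ_i ((h_i - m)² - q + m²)`. As `σ(z)` is a probability vector,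
`|m| ≤ |h|_∞` and `0 ≤ q ≤ |h|_∞²`, so the brackets are bounded by `2|h|_∞` and `6|h|_∞²`;
summing them against the weights `σ_i` gives the two bounds.
-/

open scoped ENNReal NNReal

/-- The softmax function on `ℝⁿ`. -/
noncomputable def softmaxFn {n : ℕ} (z : Fin n → ℝ) : Fin n → ℝ :=
  fun i => Real.exp (z i) / ∑ j, Real.exp (z j)

open ContinuousLinearMap in
noncomputable def softmaxFDeriv {n : ℕ} (z : Fin n → ℝ) : (Fin n → ℝ) →L[ℝ] (Fin n → ℝ) :=
  pi fun i => softmaxFn z i • (proj i - ∑ j, softmaxFn z j • proj j)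

lemma softmaxFDeriv_apply {n : ℕ} (z h : Fin n → ℝ) (i : Fin n) :
    softmaxFDeriv z h i = softmaxFn z i * (h i - ∑ j, softmaxFn z j * h j) := by
  simp [softmaxFDeriv]

lemma sum_exp_pos {n : ℕ} [NeZero n] (z : Fin n → ℝ) : 0 < ∑ j, Real.exp (z j) :=
  Finset.sum_pos (fun _ _ => Real.exp_pos _) Finset.univ_nonempty

lemma softmaxFn_nonneg {n : ℕ} (z : Fin n → ℝ) (i : Fin n) : 0 ≤ softmaxFn z i :=
  div_nonneg (Real.exp_pos _).le (Finset.sum_nonneg fun _ _ => (Real.exp_pos _).le)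

-- Only an inequality: for `n = 0` the sum is empty.
lemma sum_softmaxFn_le_one {n : ℕ} (z : Fin n → ℝ) : ∑ i, softmaxFn z i ≤ 1 := by
  cases n with
  | zero => simp
  | succ n => simp only [softmaxFn, ← Finset.sum_div, div_self (sum_exp_pos z).ne', le_refl]

lemma softmaxFn_eq_exp_sub_log {n : ℕ} [NeZero n] (z : Fin n → ℝ) (i : Fin n) :
    softmaxFn z i = Real.exp (z i - Real.log (∑ j, Real.exp (z j))) := by
  rw [Real.exp_sub, Real.exp_log (sum_exp_pos z), softmaxFn]

-- Writing `σ_i = exp (z_i - log ∑ exp z_j)` reduces the quotient rule to the chain rule.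
lemma hasFDerivAt_softmaxFn {n : ℕ} (z : Fin n → ℝ) :
    HasFDerivAt softmaxFn (softmaxFDeriv z) z := by
  rw [hasFDerivAt_pi']
  intro i
  have : NeZero n := NeZero.of_pos i.pos
  have hsum : HasFDerivAt (fun w : Fin n → ℝ => ∑ j, Real.exp (w j))
      (∑ j, Real.exp (z j) • ContinuousLinearMap.proj j) z :=
    HasFDerivAt.fun_sum fun j _ => (hasFDerivAt_apply j z).exp
  have hexp := ((hasFDerivAt_apply i z).sub (hsum.log (sum_exp_pos z).ne')).exp
  rw [funext (softmaxFn_eq_exp_sub_log · i)]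
  refine hexp.congr_fderiv ?_
  ext h
  simp only [softmaxFDeriv, ContinuousLinearMap.proj_pi, ContinuousLinearMap.proj_apply,
    ← softmaxFn_eq_exp_sub_log, Pi.sub_apply, smul_apply, sub_apply, sum_apply, smul_eq_mul]
  simp only [softmaxFn, Finset.mul_sum, div_mul_eq_mul_div, inv_mul_eq_div]

lemma fderiv_softmaxFn {n : ℕ} : fderiv ℝ (softmaxFn (n := n)) = softmaxFDeriv :=
  funext fun z => (hasFDerivAt_softmaxFn z).fderiv

lemma contDiff_softmaxFn {n : ℕ} : ContDiff ℝ ω (softmaxFn (n := n)) :=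
  contDiff_pi.mpr fun i =>
    have : NeZero n := NeZero.of_pos i.pos
    ((contDiff_apply ℝ ℝ i).exp.div
      (ContDiff.sum fun j _ => (contDiff_apply ℝ ℝ j).exp)) fun z => (sum_exp_pos z).ne'

lemma differentiable_fderiv_softmaxFn {n : ℕ} :
    Differentiable ℝ (fderiv ℝ (softmaxFn (n := n))) :=
  (contDiff_softmaxFn.fderiv_right (m := 1) le_top).differentiable one_ne_zero

lemma fderiv_fderiv_softmaxFn_apply {n : ℕ} (z h : Fin n → ℝ) (i : Fin n) :
    fderiv ℝ (fderiv ℝ softmaxFn) z h h i = softmaxFn z i *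
      ((h i - ∑ j, softmaxFn z j * h j) ^ 2 - ∑ j, softmaxFn z j * h j ^ 2
        + (∑ j, softmaxFn z j * h j) ^ 2) := by
  have hσ : ∀ j,
      HasFDerivAt (softmaxFn · j) ((ContinuousLinearMap.proj j).comp (softmaxFDeriv z)) z :=
    hasFDerivAt_pi'.mp (hasFDerivAt_softmaxFn z)
  have hprod := (hσ i).mul ((hasFDerivAt_const (h i) z).sub
    (HasFDerivAt.fun_sum (u := Finset.univ) fun j _ => (hσ j).mul_const (h j)))
  rw [fderiv_softmaxFn]
  let evalAt : ((Fin n → ℝ) →L[ℝ] (Fin n → ℝ)) →L[ℝ] ℝ :=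
    (ContinuousLinearMap.proj i).comp (ContinuousLinearMap.apply ℝ (Fin n → ℝ) h)
  have hcomp := evalAt.hasFDerivAt.comp z
    ((fderiv_softmaxFn ▸ differentiable_fderiv_softmaxFn) z).hasFDerivAt
  have hderiv := congrArg (· h) (hcomp.unique (hprod.congr_of_eventuallyEq
    (.of_forall fun w => softmaxFDeriv_apply w h i)))
  simp only [evalAt, ContinuousLinearMap.comp_apply, ContinuousLinearMap.apply_apply,
    ContinuousLinearMap.proj_apply, zero_sub, smul_neg, Pi.sub_apply, add_apply, neg_apply,
    smul_apply, sum_apply, softmaxFDeriv_apply, smul_eq_mul] at hderiv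
  have hvar : ∑ j, h j * (softmaxFn z j * (h j - ∑ k, softmaxFn z k * h k))
      = ∑ j, softmaxFn z j * h j ^ 2 - (∑ j, softmaxFn z j * h j) ^ 2 := by
    rw [sq (∑ j, _), Finset.sum_mul, ← Finset.sum_sub_distrib]
    exact Finset.sum_congr rfl fun j _ => by ring
  rw [hderiv, hvar]
  ring

lemma sum_abs_mul_le_of_sum_le_one {ι : Type*} [Fintype ι] {p g : ι → ℝ} {C : ℝ}
    (hp : ∀ i, 0 ≤ p i) (hp1 : ∑ i, p i ≤ 1) (hC : 0 ≤ C) (hg : ∀ i, |g i| ≤ C) :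
    ∑ i, |p i * g i| ≤ C :=
  calc ∑ i, |p i * g i| = ∑ i, p i * |g i| := by simp only [abs_mul, abs_of_nonneg (hp _)]
    _ ≤ ∑ i, p i * C := Finset.sum_le_sum fun i _ => mul_le_mul_of_nonneg_left (hg i) (hp i)
    _ = (∑ i, p i) * C := (Finset.sum_mul ..).symm
    _ ≤ C := mul_le_of_le_one_left hC hp1

section Bounds

variable {n : ℕ} (z : Fin n → ℝ) {h : Fin n → ℝ} {M : ℝ}

lemma abs_softmax_mean_le (hM0 : 0 ≤ M) (hM : ∀ i, |h i| ≤ M) : |∑ j, softmaxFn z j * h j| ≤ M :=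
  (Finset.abs_sum_le_sum_abs _ _).trans
    (sum_abs_mul_le_of_sum_le_one (softmaxFn_nonneg z) (sum_softmaxFn_le_one z) hM0 hM)

lemma abs_sub_softmax_mean_le (hM0 : 0 ≤ M) (hM : ∀ i, |h i| ≤ M) (i : Fin n) :
    |h i - ∑ j, softmaxFn z j * h j| ≤ 2 * M := by
  linarith [abs_sub (h i) (∑ j, softmaxFn z j * h j), hM i, abs_softmax_mean_le z hM0 hM]

lemma sum_abs_fderiv_softmaxFn_le (hM0 : 0 ≤ M) (hM : ∀ i, |h i| ≤ M) :
    ∑ i, |fderiv ℝ softmaxFn z h i| ≤ 2 * M := by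
  simp only [fderiv_softmaxFn, softmaxFDeriv_apply]
  exact sum_abs_mul_le_of_sum_le_one (softmaxFn_nonneg z) (sum_softmaxFn_le_one z) (by positivity)
    (abs_sub_softmax_mean_le z hM0 hM)

lemma sum_abs_fderiv_fderiv_softmaxFn_le (hM0 : 0 ≤ M) (hM : ∀ i, |h i| ≤ M) :
    ∑ i, |fderiv ℝ (fderiv ℝ softmaxFn) z h h i| ≤ 6 * M ^ 2 := by
  set m := ∑ j, softmaxFn z j * h j
  set q := ∑ j, softmaxFn z j * h j ^ 2
  have hq0 : 0 ≤ q := Finset.sum_nonneg fun j _ => mul_nonneg (softmaxFn_nonneg z j) (sq_nonneg _)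
  have hq : q ≤ M ^ 2 :=
    (Finset.sum_le_sum fun j _ => le_abs_self _).trans <|
      sum_abs_mul_le_of_sum_le_one (softmaxFn_nonneg z) (sum_softmaxFn_le_one z) (by positivity)
        fun j => by simpa only [abs_pow] using pow_le_pow_left₀ (abs_nonneg _) (hM j) 2
  have hm : m ^ 2 ≤ M ^ 2 := sq_le_sq' (abs_le.mp (abs_softmax_mean_le z hM0 hM)).1
    (abs_le.mp (abs_softmax_mean_le z hM0 hM)).2
  simp only [fderiv_fderiv_softmaxFn_apply]
  refine sum_abs_mul_le_of_sum_le_one (softmaxFn_nonneg z) (sum_softmaxFn_le_one z) (by positivity)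
    fun i => ?_
  have hx := abs_le.mp (abs_sub_softmax_mean_le z hM0 hM i)
  have hx2 : (h i - m) ^ 2 ≤ (2 * M) ^ 2 := sq_le_sq' hx.1 hx.2
  rw [abs_le]
  constructor <;> nlinarith [sq_nonneg (h i - m), sq_nonneg m]

end Bounds

/-- The softmax is (twice) differentiable and its first and second
differentials satisfy `|dσ(z)·h|₁ ≤ 2|h|_∞` and `|d²σ(z)·(h,h)|₁ ≤ 6|h|_∞²`. -/
theorem stmt_18 {n : ℕ} (z h : Fin n → ℝ) :
    Differentiable ℝ (softmaxFn (n := n)) ∧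
    Differentiable ℝ (fderiv ℝ (softmaxFn (n := n))) ∧
    (∑ i, |fderiv ℝ softmaxFn z h i| ≤ 2 * ⨆ i, |h i|) ∧
    (∑ i, |fderiv ℝ (fderiv ℝ (softmaxFn (n := n))) z h h i| ≤ 6 * (⨆ i, |h i|) ^ 2) := by
  have hM0 : 0 ≤ ⨆ i, |h i| := Real.iSup_nonneg fun i => abs_nonneg (h i)
  have hM : ∀ i, |h i| ≤ ⨆ i, |h i| := le_ciSup (Set.finite_range _).bddAbove
  exact ⟨fun z => (hasFDerivAt_softmaxFn z).differentiableAt, differentiable_fderiv_softmaxFn,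
    sum_abs_fderiv_softmaxFn_le z hM0 hM, sum_abs_fderiv_fderiv_softmaxFn_le z hM0 hM⟩
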